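/- In the WoLF 1D filter with IMQ weight w_t = (1 + (y_t − m_{t−1})²/c²)^{−1/2} and gain k_t = (s² + q²)/(s² + q² + r²/w_t²), the gain k_t tends to 0 as y_t → ∞, and moreover k_t · y_t remains bounded as y_t → ∞, so the posterior mean update m_t = k_t y_t + (1−k_t) m_{t−1} converges to m_{t−1} as y_t → ∞. -/
import Mathlib


open Filter

/-- In the 1D WoLF filter with IMQ weight, the gain tends to 0, `k·y` stays bounded,
and the posterior-mean update converges to the previous mean as `y → ∞`. -/
theorem wolf_1d_gain_limit (s2 q2 m c r : ℝ)
    (hs2 : 0 ≤ s2) (hq2 : 0 ≤ q2) (hc : 0 < c) (hr : 0 < r) :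
    let w : ℝ → ℝ := fun y => (Real.sqrt (1 + (y - m) ^ 2 / c ^ 2))⁻¹
    let k : ℝ → ℝ := fun y => (s2 + q2) / (s2 + q2 + r ^ 2 / (w y) ^ 2)
    Tendsto k atTop (nhds 0) ∧
    (∃ M : ℝ, ∀ᶠ y in atTop, |k y * y| ≤ M) ∧
    Tendsto (fun y => k y * y + (1 - k y) * m) atTop (nhds m) := by
  intro w k
  set A := s2 + q2 with hA
  have hAnn : 0 ≤ A := add_nonneg hs2 hq2
  have hwsq : ∀ y, (w y) ^ 2 = (1 + (y - m) ^ 2 / c ^ 2)⁻¹ := by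
    intro y
    have h1 : (0:ℝ) ≤ 1 + (y - m) ^ 2 / c ^ 2 := by positivity
    simp [w, inv_pow, Real.sq_sqrt h1]
  set D := fun y : ℝ => A + r ^ 2 * (1 + (y - m) ^ 2 / c ^ 2) with hDdef
  have hk : ∀ y, k y = A / D y := by
    intro y
    simp only [k, hwsq, hDdef, hA, div_eq_mul_inv, inv_inv]
  have hDtop : Tendsto D atTop atTop := by
    have h1 : Tendsto (fun y : ℝ => y - m) atTop atTop :=
      tendsto_atTop_add_const_right atTop (-m) tendsto_id
    have h2 : Tendsto (fun y : ℝ => (y - m) ^ 2) atTop atTop :=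
      (tendsto_pow_atTop two_ne_zero).comp h1
    have h3 : Tendsto (fun y : ℝ => (y - m) ^ 2 / c ^ 2) atTop atTop :=
      h2.atTop_div_const (by positivity)
    have h4 : Tendsto (fun y : ℝ => 1 + (y - m) ^ 2 / c ^ 2) atTop atTop :=
      tendsto_atTop_add_const_left atTop 1 h3
    have h5 : Tendsto (fun y : ℝ => r ^ 2 * (1 + (y - m) ^ 2 / c ^ 2)) atTop atTop :=
      h4.const_mul_atTop (by positivity)
    exact tendsto_atTop_add_const_left atTop A h5
  have h1 : Tendsto k atTop (nhds 0) := by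
    have : Tendsto (fun y => A / D y) atTop (nhds 0) :=
      tendsto_const_nhds.div_atTop hDtop
    exact this.congr fun y => (hk y).symm
  -- D y / y tends to atTop
  set β := r ^ 2 / c ^ 2 with hβdef
  have hβ : 0 < β := by positivity
  have hDy : Tendsto (fun y => D y / y) atTop atTop := by
    have hlin : Tendsto (fun y : ℝ => β * (y - 2 * m)) atTop atTop :=
      (tendsto_atTop_add_const_right atTop (-(2 * m)) tendsto_id).const_mul_atTop hβ
        |>.congr (fun y => by simp only [id_eq]; ring)
    apply tendsto_atTop_mono' atTop _ hlin
    filter_upwards [eventually_gt_atTop 0] with y hy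
    rw [le_div_iff₀ hy]
    have hc2 : (0:ℝ) < c ^ 2 := by positivity
    have key : r ^ 2 * ((y - m) ^ 2 / c ^ 2) = β * (y - m) ^ 2 := by
      rw [hβdef]; ring
    have hDval : D y = A + r ^ 2 + β * (y - m) ^ 2 := by
      rw [hDdef]; simp only []; rw [← key]; ring
    rw [hDval]
    nlinarith [mul_nonneg hβ.le (sq_nonneg m), sq_nonneg r]
  have h2 : Tendsto (fun y => k y * y) atTop (nhds 0) := by
    have hev : ∀ᶠ y in atTop, A / (D y / y) = k y * y := by
      filter_upwards [eventually_gt_atTop 0] with y hy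
      rw [hk, div_div_eq_mul_div, div_mul_eq_mul_div, mul_comm A y, mul_div_assoc]
    exact (tendsto_const_nhds.div_atTop hDy).congr' hev
  refine ⟨h1, ⟨1, ?_⟩, ?_⟩
  · filter_upwards [Metric.tendsto_nhds.mp h2 1 one_pos] with y hy
    simpa [Real.dist_eq, abs_mul] using hy.le
  · have : Tendsto (fun y => k y * y + (1 - k y) * m) atTop (nhds (0 + (1 - 0) * m)) :=
      h2.add ((tendsto_const_nhds.sub h1).mul tendsto_const_nhds)
    simpa using this
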